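/- arXiv:1605.01161 — 2 statements merged into one kernel-verified Lean document; each statement's English description precedes it below -/
import Mathlib

section
/- Let (V,b) be a real symplectic vector space. Any linear map Φ : V → sp(V,b) with Φ(v)(w) = Φ(w)(v) for all v,w gives rise to a totally symmetric trilinear form T(u,v,w) = b(Φ(u)(v), w); conversely the map Φ ↦ T is a linear isomorphism from the first prolongation sp(V,b)⁽¹⁾ onto the space of totally symmetric trilinear forms on V. In particular sp(V,b)⁽¹⁾ ≅ S³V*. -/
/-!
Since `b` is alternating, the condition `Φ(u) ∈ sp(V,b)` says exactly that
`T(u,v,w) = b(Φ(u)(v), w)` is symmetric in its last two arguments, while the prolongation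
condition makes it symmetric in its first two; so `T` is totally symmetric. Nondegeneracy of
`b` makes `Φ ↦ T` injective, and conversely a totally symmetric `T` is realised by
`Φ(u)(v) = b♭⁻¹(T(u,v,·))`, where `b♭ : V ≃ V*` is the musical isomorphism.
-/

variable {V : Type*} [AddCommGroup V] [Module ℝ V]

/-- Membership of `Φ : V → gl(V)` in the first prolongation of `sp(V,b)`:
all values are in `sp(V,b)` and `Φ(v)(w)` is symmetric in `(v,w)`. -/
def InSpProlong (b : LinearMap.BilinForm ℝ V) (Φ : V →ₗ[ℝ] V →ₗ[ℝ] V) : Prop :=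
  (∀ u v w : V, b (Φ u v) w + b v (Φ u w) = 0) ∧ (∀ v w : V, Φ v w = Φ w v)

theorem LinearMap.BilinForm.Nondegenerate.ext_of_apply_eq {R M N P : Type*} [CommRing R]
    [AddCommGroup M] [Module R M] [AddCommGroup N] [Module R N] [AddCommGroup P] [Module R P]
    {b : LinearMap.BilinForm R P} (hb : b.Nondegenerate) {Φ Ψ : M →ₗ[R] N →ₗ[R] P}
    (h : ∀ u v w, b (Φ u v) w = b (Ψ u v) w) : Φ = Ψ := by
  ext u v
  exact LinearMap.ker_eq_bot.mp hb.ker_eq_bot (LinearMap.ext (h u v))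

namespace InSpProlong

variable {b : LinearMap.BilinForm ℝ V} {Φ : V →ₗ[ℝ] V →ₗ[ℝ] V}

theorem form_apply_swap_left (hΦ : InSpProlong b Φ) (u v w : V) :
    b (Φ u v) w = b (Φ v u) w := by
  rw [hΦ.2 u v]

theorem form_apply_swap_right (hAlt : b.IsAlt) (hΦ : InSpProlong b Φ) (u v w : V) :
    b (Φ u v) w = b (Φ u w) v := by
  have hsp := hΦ.1 u v w
  have hskew := hAlt.neg_eq (Φ u w) v
  linarith

end InSpProlong

section OfTrilinear

variable [FiniteDimensional ℝ V] {b : LinearMap.BilinForm ℝ V}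

noncomputable def prolongOfTrilinear (hNd : b.Nondegenerate)
    (T : V →ₗ[ℝ] V →ₗ[ℝ] V →ₗ[ℝ] ℝ) : V →ₗ[ℝ] V →ₗ[ℝ] V :=
  T.compr₂ (b.toDual hNd).symm.toLinearMap

theorem form_prolongOfTrilinear_apply (hNd : b.Nondegenerate)
    (T : V →ₗ[ℝ] V →ₗ[ℝ] V →ₗ[ℝ] ℝ) (u v w : V) :
    b (prolongOfTrilinear hNd T u v) w = T u v w :=
  LinearMap.BilinForm.apply_toDual_symm_apply (hB := hNd) (T u v) w

theorem inSpProlong_prolongOfTrilinear (hAlt : b.IsAlt) (hNd : b.Nondegenerate)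
    {T : V →ₗ[ℝ] V →ₗ[ℝ] V →ₗ[ℝ] ℝ} (hT : ∀ u v w, T u v w = T v u w ∧ T u v w = T u w v) :
    InSpProlong b (prolongOfTrilinear hNd T) := by
  constructor
  · intro u v w
    rw [← hAlt.neg_eq (prolongOfTrilinear hNd T u w), form_prolongOfTrilinear_apply,
      form_prolongOfTrilinear_apply, (hT u v w).2, add_neg_cancel]
  · intro v w
    simp only [prolongOfTrilinear, LinearMap.compr₂_apply]
    congr 1
    ext x
    exact (hT v w x).1

end OfTrilinear

theorem stmt9 [FiniteDimensional ℝ V]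
    (b : LinearMap.BilinForm ℝ V) (hAlt : LinearMap.BilinForm.IsAlt b)
    (hNd : LinearMap.BilinForm.Nondegenerate b) :
    -- the associated trilinear form `T(u,v,w) = b(Φ(u)(v),w)` is totally symmetric
    (∀ Φ : V →ₗ[ℝ] V →ₗ[ℝ] V, InSpProlong b Φ →
      ∀ u v w : V, b (Φ u v) w = b (Φ v u) w ∧ b (Φ u v) w = b (Φ u w) v) ∧
    -- `Φ ↦ T` is linear …
    (∀ (Φ Ψ : V →ₗ[ℝ] V →ₗ[ℝ] V) (c : ℝ) (u v w : V),
      b ((Φ + c • Ψ) u v) w = b (Φ u v) w + c * b (Ψ u v) w) ∧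
    -- … injective …
    (∀ Φ Ψ : V →ₗ[ℝ] V →ₗ[ℝ] V, InSpProlong b Φ → InSpProlong b Ψ →
      (∀ u v w : V, b (Φ u v) w = b (Ψ u v) w) → Φ = Ψ) ∧
    -- … and surjective onto the totally symmetric trilinear forms
    (∀ T : V →ₗ[ℝ] V →ₗ[ℝ] V →ₗ[ℝ] ℝ,
      (∀ u v w : V, T u v w = T v u w ∧ T u v w = T u w v) →
      ∃ Φ : V →ₗ[ℝ] V →ₗ[ℝ] V, InSpProlong b Φ ∧ ∀ u v w : V, b (Φ u v) w = T u v w) := by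
  refine ⟨fun Φ hΦ u v w => ⟨hΦ.form_apply_swap_left u v w, hΦ.form_apply_swap_right hAlt u v w⟩,
    fun _ _ _ _ _ _ => by simp, fun _ _ _ _ => hNd.ext_of_apply_eq, fun T hT => ?_⟩
  exact ⟨prolongOfTrilinear hNd T, inSpProlong_prolongOfTrilinear hAlt hNd hT,
    form_prolongOfTrilinear_apply hNd T⟩
end

section
/- Let M be a smooth manifold of even dimension > 4 with a conformally symplectic structure ℓ, and let ∇ be a torsion-free linear connection on TM compatible with ℓ (meaning ∇_ξ α is a section of ℓ for every section α of ℓ and vector field ξ). Then every local nonvanishing closed section α of ℓ is ∇-parallel. -/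
/-!
STATEMENT 18: Let `ℓ` be a conformally symplectic structure on a smooth manifold of
even dimension `2m > 4` (modelled locally on an open subset `U` of a
finite-dimensional real vector space) and `∇` a torsion-free linear connection
(given in the chart by Christoffel symbols `Γ`) compatible with `ℓ`, i.e. `∇_ξ α` is
again a section of `ℓ` for every section `α` of `ℓ`.  Then every local nonvanishing
closed smooth section `α` of `ℓ` is parallel: `∇α = 0`.
-/

open Module

variable {E : Type*} [NormedAddCommGroup E] [NormedSpace ℝ E]

/-- Two-forms on `E` (the fibre of `Λ²T*M`). -/
abbrev TwoForm (E : Type*) [NormedAddCommGroup E] [NormedSpace ℝ E] :=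
  E [⋀^Fin 2]→ₗ[ℝ] ℝ

/-- The exterior derivative of a two-form `τ`, as a trilinear function:
`dτ(u,v,w) = (D_uτ)(v,w) - (D_vτ)(u,w) + (D_wτ)(u,v)`. -/
noncomputable def extDer2 (τ : E → TwoForm E) (x u v w : E) : ℝ :=
  fderiv ℝ (fun y => τ y ![v, w]) x u - fderiv ℝ (fun y => τ y ![u, w]) x v
    + fderiv ℝ (fun y => τ y ![u, v]) x w

/-- The wedge product of a one-form `φ` and a two-form `ω`, as a trilinear function. -/
def wedge12 (φ : E →ₗ[ℝ] ℝ) (ω : TwoForm E) (u v w : E) : ℝ :=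
  φ u * ω ![v, w] - φ v * ω ![u, w] + φ w * ω ![u, v]

/-- Nondegeneracy of a two-form. -/
def Nondeg2 (ω : TwoForm E) : Prop := ∀ v : E, (∀ w : E, ω ![v, w] = 0) → v = 0

/-- Smoothness of a field of two-forms on a set (componentwise). -/
def SmoothSecOn (U : Set E) (τ : E → TwoForm E) : Prop :=
  ∀ v w : E, ContDiffOn ℝ (⊤ : ℕ∞) (fun y => τ y ![v, w]) U

/-- An almost conformally symplectic structure on `U`: a smooth line subbundle
`ℓ` of the bundle of two-forms, all of whose nonzero elements are nondegenerate. -/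
structure IsACS (U : Set E) (ℓ : E → Submodule ℝ (TwoForm E)) : Prop where
  rank_one : ∀ x ∈ U, finrank ℝ (ℓ x) = 1
  nondeg : ∀ x ∈ U, ∀ ω ∈ ℓ x, ω ≠ 0 → Nondeg2 ω
  loc_triv : ∀ x ∈ U, ∃ V : Set E, IsOpen V ∧ x ∈ V ∧ V ⊆ U ∧
      ∃ σ : E → TwoForm E, SmoothSecOn V σ ∧ (∀ y ∈ V, σ y ∈ ℓ y) ∧ ∀ y ∈ V, σ y ≠ 0

/-- The structure is conformally symplectic: locally around each point there is a
smooth section of `ℓ`, nonzero at the point, which is closed as a two-form. -/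
def IsCS (U : Set E) (ℓ : E → Submodule ℝ (TwoForm E)) : Prop :=
  ∀ x ∈ U, ∃ V : Set E, IsOpen V ∧ x ∈ V ∧ V ⊆ U ∧
    ∃ σ : E → TwoForm E, SmoothSecOn V σ ∧ (∀ y ∈ V, σ y ∈ ℓ y) ∧ σ x ≠ 0 ∧
      ∀ y ∈ V, ∀ u v w : E, extDer2 σ y u v w = 0

/-- The covariant derivative of a two-form `τ` with respect to the connection with
Christoffel symbols `Γ`: `(∇_u τ)(v,w)` at `x`. -/
noncomputable def covDer2 (Γ : E → E →ₗ[ℝ] E →ₗ[ℝ] E) (τ : E → TwoForm E)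
    (x u v w : E) : ℝ :=
  fderiv ℝ (fun y => τ y ![v, w]) x u - τ x ![Γ x u v, w] - τ x ![v, Γ x u w]

set_option linter.unusedSectionVars false in
lemma upd_one (a b c : E) : Function.update ![a, b] 1 c = ![a, c] := by
  funext i; fin_cases i <;> simp

lemma two_skew (ω : TwoForm E) (a b : E) : ω ![b, a] = - ω ![a, b] := by
  have h : (![a, b] ∘ Equiv.swap (0 : Fin 2) 1) = ![b, a] := by
    funext i; fin_cases i <;> simp
  rw [← h, ω.map_swap _ (by decide : (0 : Fin 2) ≠ 1)]

/-- The linear functional `v ↦ ω(a, v)`. -/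
def slot2 (ω : TwoForm E) (a : E) : E →ₗ[ℝ] ℝ where
  toFun v := ω ![a, v]
  map_add' u v := by
    have := ω.map_update_add ![a, u] 1 u v
    simpa [upd_one] using this
  map_smul' c v := by
    have := ω.map_update_smul ![a, v] 1 c v
    simpa [upd_one] using this

@[simp] lemma slot2_apply (ω : TwoForm E) (a v : E) : slot2 ω a v = ω ![a, v] := rfl

lemma finrank_ker_ge [FiniteDimensional ℝ E] (f : E →ₗ[ℝ] ℝ) :
    finrank ℝ E - 1 ≤ finrank ℝ (LinearMap.ker f) := by
  have h1 := f.finrank_range_add_finrank_ker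
  have h2 : finrank ℝ (LinearMap.range f) ≤ 1 := by
    simpa using (LinearMap.range f).finrank_le
  omega

theorem stmt18 [FiniteDimensional ℝ E] (m : ℕ) (hm : 3 ≤ m) (hdim : finrank ℝ E = 2 * m)
    (U : Set E) (hU : IsOpen U) (ℓ : E → Submodule ℝ (TwoForm E))
    (hacs : IsACS U ℓ) (hcs : IsCS U ℓ)
    (Γ : E → E →ₗ[ℝ] E →ₗ[ℝ] E) (htf : ∀ x ∈ U, ∀ u v : E, Γ x u v = Γ x v u)
    (hcompat : ∀ W : Set E, IsOpen W → W ⊆ U → ∀ α : E → TwoForm E,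
      SmoothSecOn W α → (∀ y ∈ W, α y ∈ ℓ y) →
      ∀ x ∈ W, ∀ u : E, ∃ β ∈ ℓ x, ∀ v w : E, covDer2 Γ α x u v w = β ![v, w])
    (W : Set E) (hW : IsOpen W) (hWU : W ⊆ U)
    (α : E → TwoForm E) (hαs : SmoothSecOn W α) (hαℓ : ∀ x ∈ W, α x ∈ ℓ x)
    (hα0 : ∀ x ∈ W, α x ≠ 0)
    (hαcl : ∀ x ∈ W, ∀ u v w : E, extDer2 α x u v w = 0) :
    ∀ x ∈ W, ∀ u v w : E, covDer2 Γ α x u v w = 0 := by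
  intro x hx u v w
  have hxU : x ∈ U := hWU hx
  have hα0x : α x ≠ 0 := hα0 x hx
  have hαℓx : α x ∈ ℓ x := hαℓ x hx
  -- the scalar function: covariant derivative is a multiple of α x
  have hrk := hacs.rank_one x hxU
  have hc : ∀ u : E, ∃ c : ℝ, ∀ v w : E,
      covDer2 Γ α x u v w = c * α x ![v, w] := by
    intro u
    obtain ⟨β, hβℓ, hβ⟩ := hcompat W hW hWU α hαs hαℓ x hx u
    obtain ⟨c, hcc⟩ := (finrank_eq_one_iff_of_nonzero'
      (⟨α x, hαℓx⟩ : ℓ x) (by simpa using hα0x)).mp hrk ⟨β, hβℓ⟩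
    refine ⟨c, fun v w => ?_⟩
    have : β = c • α x := by
      have := congrArg Subtype.val hcc
      simpa using this.symm
    rw [hβ, this]; simp [mul_comm]
  choose c hc using hc
  -- wedge identity from closedness and torsion-freeness
  have hw : ∀ u v w : E,
      c u * α x ![v, w] - c v * α x ![u, w] + c w * α x ![u, v] = 0 := by
    intro u v w
    have hcl := hαcl x hx u v w
    have key : extDer2 α x u v w =
        covDer2 Γ α x u v w - covDer2 Γ α x v u w + covDer2 Γ α x w u v := by
      simp only [extDer2, covDer2]
      have h1 := htf x hxU u v
      have h2 := htf x hxU u w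
      have h3 := htf x hxU v w
      rw [h1, h2, h3]
      have s1 := two_skew (α x) (Γ x w u) v
      have s2 := two_skew (α x) (Γ x w v) u
      linarith [s1, s2]
    rw [key, hc u v w, hc v u w, hc w u v] at hcl
    linarith [hcl]

  -- show the scalar vanishes
  have hcz : ∀ u : E, c u = 0 := by
    intro u
    by_contra hcu
    have hH : ∀ v w : E, α x ![u, v] = 0 → α x ![u, w] = 0 → α x ![v, w] = 0 := by
      intro v w h1 h2
      have := hw u v w
      rw [h1, h2] at this
      have : c u * α x ![v, w] = 0 := by linarith
      exact (mul_eq_zero.mp this).resolve_left hcu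
    set f := slot2 (α x) u with hf_def
    by_cases hf : f = 0
    · apply hα0x
      ext z
      have hz : (z : Fin 2 → E) = ![z 0, z 1] := by
        funext i; fin_cases i <;> rfl
      rw [hz]
      have h0 : ∀ v : E, α x ![u, v] = 0 := fun v => by
        have := LinearMap.congr_fun hf v
        simpa [hf_def] using this
      simpa using hH (z 0) (z 1) (h0 (z 0)) (h0 (z 1))
    · obtain ⟨u₀, hu₀⟩ : ∃ u₀ : E, f u₀ ≠ 0 := by
        by_contra h
        push_neg at h
        exact hf (by ext v; simpa using h v)
      set g := slot2 (α x) u₀ with hg_def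
      -- the intersection of the kernels is nonzero
      have hK : finrank ℝ ((LinearMap.ker f ⊓ LinearMap.ker g : Submodule ℝ E)) ≠ 0 := by
        have h1 := finrank_ker_ge f
        have h2 := finrank_ker_ge g
        have h3 := Submodule.finrank_sup_add_finrank_inf_eq
          (LinearMap.ker f) (LinearMap.ker g)
        have h4 : finrank ℝ ((LinearMap.ker f ⊔ LinearMap.ker g : Submodule ℝ E))
            ≤ finrank ℝ E := Submodule.finrank_le _
        omega
      obtain ⟨v, hvK, hv0⟩ := Submodule.exists_mem_ne_zero_of_ne_bot
        (p := LinearMap.ker f ⊓ LinearMap.ker g)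
        (fun hbot => hK (by rw [hbot]; simp))
      have hvf : α x ![u, v] = 0 := hvK.1
      have hvg : α x ![u₀, v] = 0 := hvK.2
      -- v is in the radical of α x : contradiction with nondegeneracy
      apply hv0
      apply hacs.nondeg x hxU (α x) hαℓx hα0x v
      intro z
      have hzdec : z = (z - (f z / f u₀) • u₀) + (f z / f u₀) • u₀ := by abel
      have hz' : α x ![u, z - (f z / f u₀) • u₀] = 0 := by
        have : f (z - (f z / f u₀) • u₀) = 0 := by
          rw [map_sub, map_smul, smul_eq_mul]
          field_simp
          ring
        simpa [hf_def] using this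
      have hvz' : α x ![v, z - (f z / f u₀) • u₀] = 0 := hH v _ hvf hz'
      have hvu₀ : α x ![v, u₀] = 0 := by
        rw [two_skew]; rw [hvg]; ring
      calc α x ![v, z] = slot2 (α x) v z := rfl
        _ = slot2 (α x) v ((z - (f z / f u₀) • u₀) + (f z / f u₀) • u₀) := by rw [← hzdec]
        _ = α x ![v, z - (f z / f u₀) • u₀] + (f z / f u₀) * α x ![v, u₀] := by
            rw [map_add, map_smul]; rfl
        _ = 0 := by rw [hvz', hvu₀]; ring
  rw [hc u v w, hcz u, zero_mul]
end
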